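/- Let E = V(x^3+y^3+z^3) and τ2(a:b:c) = (b:a:cε), and let w_p be the Sklyanin potential with coefficients (a:b:c), p = (a:b:c) ∈ E not 3-torsion. Then neither τ2 nor τ2^2 lies in Aut(w_p): explicitly, (τ2⊗τ2⊗τ2)(w_p) = aη^3(yxz+xzy+zyx) + bη^3(yzx+xyz+zxy) + c(x^3+y^3+z^3), which is not a scalar multiple of w_p, where ε = η^3. -/

import Mathlib

noncomputable section

/-- An element of `V ⊗ V ⊗ V` (for `V` 3-dimensional with basis `x₀, x₁, x₂`,
written `x, y, z`) given by its coefficients in the basis `xᵢ ⊗ xⱼ ⊗ xₗ`. -/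
abbrev Pot (k : Type*) := Fin 3 → Fin 3 → Fin 3 → k

variable {k : Type*} [Field k]

/-- The basis monomial `xᵢ ⊗ xⱼ ⊗ xₗ`. -/
def mono (i j l : Fin 3) : Pot k :=
  fun a b c => if a = i ∧ b = j ∧ c = l then 1 else 0

/-- The action of `θ ⊗ θ ⊗ θ` on `V ⊗ V ⊗ V`, where `θ ∈ GL(V)` has matrix `M`,
i.e. `θ(xₐ) = ∑ᵢ M i a • xᵢ`. -/
def actT (M : Matrix (Fin 3) (Fin 3) k) (w : Pot k) : Pot k :=
  fun i j l => ∑ a : Fin 3, ∑ b : Fin 3, ∑ c : Fin 3, M i a * M j b * M l c * w a b c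

/-- The Sklyanin potential
`w_p = a(xyz+yzx+zxy) + b(xzy+yxz+zyx) + c(x³+y³+z³)`. -/
def skly (a b c : k) : Pot k :=
  a • (mono 0 1 2 + mono 1 2 0 + mono 2 0 1) +
    b • (mono 0 2 1 + mono 1 0 2 + mono 2 1 0) +
    c • (mono 0 0 0 + mono 1 1 1 + mono 2 2 2)

/-! `τ₂` is the swap `x ↔ y` followed by `diag(1, 1, ε)`. The swap reverses the cyclic order
of every word and so exchanges the coefficients `a` and `b` of `w_p`; a diagonal matrix with
cube roots of unity on the diagonal fixes `x³, y³, z³` and multiplies `xyz` and `xzy` by its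
determinant. Hence `τ₂` sends `w_(a,b,c)` to `w_(εb,εa,c)` and `τ₂²` sends it to
`w_(ε²a,ε²b,c)`. In `μ • w_p` the coefficient of `x³` forces `μ = 1` (as `c ≠ 0`), and then the
coefficients of `xyz` and `xzy` force `ε² = 1`. -/

lemma actT_mul (M N : Matrix (Fin 3) (Fin 3) k) (w : Pot k) :
    actT (M * N) w = actT M (actT N w) := by
  funext i j l
  simp only [actT, Matrix.mul_apply, Fin.sum_univ_three]
  ring

lemma actT_diagonal_apply (d : Fin 3 → k) (w : Pot k) (i j l : Fin 3) :
    actT (Matrix.diagonal d) w i j l = d i * d j * d l * w i j l := by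
  simp [actT, Matrix.diagonal_apply]

lemma actT_permMatrix_apply (σ : Equiv.Perm (Fin 3)) (w : Pot k) (i j l : Fin 3) :
    actT (σ.permMatrix k) w i j l = w (σ i) (σ j) (σ l) := by
  simp [actT]

lemma smul_skly (μ a b c : k) : μ • skly a b c = skly (μ * a) (μ * b) (μ * c) := by
  simp only [skly, smul_add, smul_smul]

lemma skly_inj {a b c a' b' c' : k} :
    skly a b c = skly a' b' c' ↔ a = a' ∧ b = b' ∧ c = c' := by
  refine ⟨fun h => ⟨?_, ?_, ?_⟩, by rintro ⟨rfl, rfl, rfl⟩; rfl⟩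
  · simpa [skly, mono] using congrFun (congrFun (congrFun h 0) 1) 2
  · simpa [skly, mono] using congrFun (congrFun (congrFun h 0) 2) 1
  · simpa [skly, mono] using congrFun (congrFun (congrFun h 0) 0) 0

lemma actT_swap_skly (a b c : k) :
    actT ((Equiv.swap 0 1).permMatrix k) (skly a b c) = skly b a c := by
  funext i j l
  rw [actT_permMatrix_apply]
  fin_cases i <;> fin_cases j <;> fin_cases l <;> simp [skly, mono, Equiv.swap_apply_of_ne_of_ne]

lemma actT_diagonal_skly (d : Fin 3 → k) (hd : ∀ i, d i ^ 3 = 1) (a b c : k) :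
    actT (Matrix.diagonal d) (skly a b c) =
      skly (d 0 * d 1 * d 2 * a) (d 0 * d 1 * d 2 * b) c := by
  funext i j l
  rw [actT_diagonal_apply]
  fin_cases i <;> fin_cases j <;> fin_cases l <;> simp [skly, mono] <;> ring_nf <;> simp [hd]

def tau2 (ε : k) : Matrix (Fin 3) (Fin 3) k := !![0, 1, 0; 1, 0, 0; 0, 0, ε]

lemma tau2_eq_diagonal_mul_permMatrix (ε : k) :
    tau2 ε = Matrix.diagonal ![1, 1, ε] * (Equiv.swap 0 1).permMatrix k := by
  ext i j
  fin_cases i <;> fin_cases j <;> simp [tau2, Equiv.swap_apply_of_ne_of_ne]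

lemma actT_tau2_skly {ε : k} (hε : ε ^ 3 = 1) (a b c : k) :
    actT (tau2 ε) (skly a b c) = skly (ε * b) (ε * a) c := by
  have hd : ∀ i, (![1, 1, ε] : Fin 3 → k) i ^ 3 = 1 := by
    intro i; fin_cases i <;> simp [hε]
  rw [tau2_eq_diagonal_mul_permMatrix, actT_mul, actT_swap_skly, actT_diagonal_skly _ hd]
  simp

lemma eq_one_of_skly_eq_smul_skly {a b c a' b' μ : k} (hc : c ≠ 0)
    (h : skly a' b' c = μ • skly a b c) : μ = 1 ∧ a' = a ∧ b' = b := by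
  obtain ⟨ha', hb', hμ⟩ := skly_inj.mp (h.trans (smul_skly μ a b c))
  obtain rfl : μ = 1 := by simpa [hc] using hμ.symm
  rw [one_mul] at ha' hb'
  exact ⟨rfl, ha', hb'⟩

theorem tau2_not_in_Aut_skly_general {k : Type*} [Field k]
    (eps a b c : k) (heps : IsPrimitiveRoot eps 3)
    (habc : a * b * c ≠ 0) :
    actT (!![(0 : k), 1, 0; 1, 0, 0; 0, 0, eps]) (skly a b c) =
        skly (eps * b) (eps * a) c ∧
    (¬ ∃ mu : k, actT (!![(0 : k), 1, 0; 1, 0, 0; 0, 0, eps]) (skly a b c) =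
        mu • skly a b c) ∧
    (¬ ∃ mu : k, actT ((!![(0 : k), 1, 0; 1, 0, 0; 0, 0, eps]) *
        (!![(0 : k), 1, 0; 1, 0, 0; 0, 0, eps])) (skly a b c) = mu • skly a b c) := by
  have hab : a * b ≠ 0 := left_ne_zero_of_mul habc
  have hc : c ≠ 0 := right_ne_zero_of_mul habc
  have hε2 : eps ^ 2 ≠ 1 := heps.pow_ne_one_of_pos_of_lt (by norm_num) (by norm_num)
  have hτ := actT_tau2_skly heps.pow_eq_one
  refine ⟨hτ a b c, ?_, ?_⟩
  · rintro ⟨μ, h⟩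
    obtain ⟨rfl, hb, ha⟩ := eq_one_of_skly_eq_smul_skly hc ((hτ a b c).symm.trans h)
    refine hε2 (mul_right_cancel₀ hab ?_)
    linear_combination (eps * a) * hb + a * ha
  · rintro ⟨μ, h⟩
    change actT (tau2 eps * tau2 eps) _ = _ at h
    rw [actT_mul, hτ, hτ] at h
    obtain ⟨rfl, ha, -⟩ := eq_one_of_skly_eq_smul_skly hc h
    exact hε2 (mul_right_cancel₀ (left_ne_zero_of_mul hab) (by linear_combination ha))

/-- Let `p = (a:b:c)` be a non-3-torsion point of the Fermat cubic
(`a³+b³+c³ = 0`, `abc ≠ 0`), `w_p` the Sklyanin potential, and `τ₂ ∈ GL(V)`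
with `τ₂(x) = y`, `τ₂(y) = x`, `τ₂(z) = εz` (`ε` a primitive 3rd root of
unity). Then `(τ₂ ⊗ τ₂ ⊗ τ₂)(w_p) = aε(yxz+xzy+zyx) + bε(yzx+xyz+zxy) +
c(x³+y³+z³)`, which is not a scalar multiple of `w_p`; and neither `τ₂` nor
`τ₂²` lies in `Aut(w_p)`. -/
theorem tau2_not_in_Aut_skly {k : Type*} [Field k] [IsAlgClosed k] [CharZero k]
    (eps a b c : k) (heps : IsPrimitiveRoot eps 3)
    (habc : a * b * c ≠ 0) (hE : a ^ 3 + b ^ 3 + c ^ 3 = 0) :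
    actT (!![(0 : k), 1, 0; 1, 0, 0; 0, 0, eps]) (skly a b c) =
        skly (eps * b) (eps * a) c ∧
    (¬ ∃ mu : k, actT (!![(0 : k), 1, 0; 1, 0, 0; 0, 0, eps]) (skly a b c) =
        mu • skly a b c) ∧
    (¬ ∃ mu : k, actT ((!![(0 : k), 1, 0; 1, 0, 0; 0, 0, eps]) *
        (!![(0 : k), 1, 0; 1, 0, 0; 0, 0, eps])) (skly a b c) = mu • skly a b c) :=
  tau2_not_in_Aut_skly_general eps a b c heps habc
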